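/- arXiv:2007.14544 — 3 statements merged into one kernel-verified Lean document; each statement's English description precedes it below -/
import Mathlib

section
/- (dd^c-lemma implies formality-type quasi-isomorphisms.) Let (A, d, d^c) be as in the dd^c-lemma setting. Then the inclusion (ker d^c, d) → (A, d) induces an isomorphism on d-cohomology, and the quotient map (ker d^c, d) → (H_{d^c}(A), 0) induces an isomorphism on cohomology. -/
/-- The `dd^c`-lemma implies formality-type quasi-isomorphisms:
the inclusion `(ker d^c, d) → (A, d)` induces an isomorphism on `d`-cohomology
(surjectivity and injectivity, stated element-wise), and the quotient map
`(ker d^c, d) → (H_{d^c}(A), 0)` induces an isomorphism on cohomology. -/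
theorem stmt7 {V : Type*} [AddCommGroup V] [Module ℂ V]
    (d dc : V →ₗ[ℂ] V)
    (hd : d ∘ₗ d = 0) (hdc : dc ∘ₗ dc = 0)
    (hanti : d ∘ₗ dc + dc ∘ₗ d = 0)
    (hlem : ∀ x : V, d x = 0 → dc x = 0 →
      ((∃ u, x = d u) ∨ (∃ u, x = dc u)) → ∃ w, x = d (dc w)) :
    -- the inclusion `ker d^c ⊆ A` is surjective on `d`-cohomology
    (∀ x : V, d x = 0 → ∃ y, dc y = 0 ∧ d y = 0 ∧ ∃ z, x - y = d z) ∧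
    -- the inclusion `ker d^c ⊆ A` is injective on `d`-cohomology
    (∀ y : V, dc y = 0 → d y = 0 → (∃ z, y = d z) →
      ∃ w, dc w = 0 ∧ y = d w) ∧
    -- the quotient map `ker d^c → H_{d^c}(A)` is surjective on cohomology
    (∀ x : V, dc x = 0 → ∃ y, dc y = 0 ∧ d y = 0 ∧ ∃ z, x - y = dc z) ∧
    -- the quotient map `ker d^c → H_{d^c}(A)` is injective on cohomology
    (∀ y : V, dc y = 0 → d y = 0 → (∃ z, y = dc z) →
      ∃ w, dc w = 0 ∧ y = d w) := by
  have hd' : ∀ x : V, d (d x) = 0 := fun x => by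
    simpa using LinearMap.congr_fun hd x
  have hdc' : ∀ x : V, dc (dc x) = 0 := fun x => by
    simpa using LinearMap.congr_fun hdc x
  have hanti' : ∀ x : V, d (dc x) + dc (d x) = 0 := fun x => by
    simpa using LinearMap.congr_fun hanti x
  have hinj : ∀ y : V, dc y = 0 → d y = 0 → (∃ z, y = d z) →
      ∃ w, dc w = 0 ∧ y = d w := by
    intro y hy1 hy2 hz
    obtain ⟨w, hw⟩ := hlem y hy2 hy1 (Or.inl hz)
    exact ⟨dc w, hdc' w, hw⟩
  refine ⟨?_, hinj, ?_, ?_⟩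
  · intro x hx
    have h1 : d (dc x) = 0 := by
      have := hanti' x
      rw [hx] at this
      simpa using this
    obtain ⟨w, hw⟩ := hlem (dc x) h1 (hdc' x) (Or.inr ⟨x, rfl⟩)
    refine ⟨x + d w, ?_, ?_, ⟨-w, ?_⟩⟩
    · have h2 : dc (d w) = -dc x := by
        have := hanti' w
        rw [← hw] at this
        exact eq_neg_of_add_eq_zero_right this
      rw [map_add, h2, add_neg_cancel]
    · rw [map_add, hx, hd' w, add_zero]
    · simp
  · intro x hx
    have h1 : dc (d x) = 0 := by
      have := hanti' x
      rw [hx, map_zero] at this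
      simpa using this
    obtain ⟨w, hw⟩ := hlem (d x) (hd' x) h1 (Or.inl ⟨x, rfl⟩)
    refine ⟨x - dc w, ?_, ?_, ⟨w, ?_⟩⟩
    · rw [map_sub, hx, hdc' w, sub_zero]
    · rw [map_sub, ← hw, sub_self]
    · simp
  · intro y hy1 hy2 hz
    obtain ⟨w, hw⟩ := hlem y hy2 hy1 (Or.inr hz)
    exact ⟨dc w, hdc' w, hw⟩
end

section
/- Let H = ⊕_k H^k be a graded-commutative algebra over a field together with a degree-2 element c (the class of dη), and suppose multiplication by c is injective H^r → H^{r+2} for all r ≤ n-1 and surjective H^r → H^{r+2} for all r ≥ n-1. Let C be the complex C^k = H^k ⊕ H^{k-1} with differential D(a, b) = (bc, 0). Then: (i) for r ≤ n every class in H^r(C) has a representative of the form (a, 0) with a ∈ H^r; (ii) if s, t < n and s + t > n, the product of any two cohomology classes of degrees s and t in H^*(C) is zero. -/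
/-- Lefschetz-type statement for the complex `C^k = H^k ⊕ H^{k-1}` with
`D(a,b) = (bc, 0)` over a graded-commutative algebra `H` with `c ∈ H^2` such
that multiplication by `c` is injective in degrees `≤ n-1` and surjective in
degrees `≥ n-1`:
(i) for `r ≤ n` every class in `H^r(C)` has a representative of the form `(a,0)`;
(ii) if `s, t < n` and `s + t > n`, the product of any two cohomology classes of
degrees `s` and `t` is zero (the product of any two cocycles is a coboundary). -/
theorem stmt9 {A : Type*} [Ring A] [Algebra ℂ A]
    (G : ℤ → Submodule ℂ A)
    (hmul : ∀ i j : ℤ, ∀ x ∈ G i, ∀ y ∈ G j, x * y ∈ G (i + j))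
    (hcomm : ∀ i j : ℤ, ∀ x ∈ G i, ∀ y ∈ G j, x * y = ((-1 : ℂ) ^ (i * j)) • (y * x))
    (c : A) (hc : c ∈ G 2) (n : ℤ)
    (hinj : ∀ r : ℤ, r ≤ n - 1 → ∀ x ∈ G r, x * c = 0 → x = 0)
    (hsurj : ∀ r : ℤ, n - 1 ≤ r → ∀ y ∈ G (r + 2), ∃ x ∈ G r, x * c = y) :
    (∀ r : ℤ, r ≤ n → ∀ a ∈ G r, ∀ b ∈ G (r - 1), b * c = 0 →
      ∃ a' ∈ G r, ∃ x ∈ G (r - 2), a - a' = x * c ∧ b = 0) ∧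
    (∀ s t : ℤ, s < n → t < n → n < s + t →
      ∀ a ∈ G s, ∀ b ∈ G (s - 1), ∀ a' ∈ G t, ∀ b' ∈ G (t - 1),
        b * c = 0 → b' * c = 0 →
        ∃ x ∈ G (s + t - 2),
          a * a' = x * c ∧ a * b' + ((-1 : ℂ) ^ t) • (b * a') = 0) := by
  constructor
  · intro r hr a ha b hb hbc
    refine ⟨a, ha, 0, (G (r - 2)).zero_mem, by simp, ?_⟩
    exact hinj (r - 1) (by omega) b hb hbc
  · intro s t hs ht hst a ha b hb a' ha' b' hb' hbc hb'c
    have hbz : b = 0 := hinj (s - 1) (by omega) b hb hbc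
    have hb'z : b' = 0 := hinj (t - 1) (by omega) b' hb' hb'c
    have haa' : a * a' ∈ G ((s + t - 2) + 2) := by
      have := hmul s t a ha a' ha'
      simpa [show s + t - 2 + 2 = s + t by ring] using this
    obtain ⟨x, hx, hxc⟩ := hsurj (s + t - 2) (by omega) _ haa'
    exact ⟨x, hx, hxc.symm, by simp [hbz, hb'z]⟩
end

section
/- (Quadraticity of the Maurer–Cartan locus.) Let g = ⊕ g^k be a graded Lie algebra and c a degree-2 central operation, with T : g^0 → g^2 denoting multiplication by c. Suppose that multiplication by c is injective on g^1 and that c·[α, β] = [α, c·β]. If α ∈ g^1 and β ∈ g^0 satisfy T(β) + ½[α, α] = 0, then [α, β] = 0. Hence the solution set {(α, β) : c·β + ½[α,α] = 0 and [α,β] = 0} of the full Maurer–Cartan equation coincides with the quadratic variety {(α,β) : c·β + ½[α,α] = 0}. -/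
/-- Quadraticity of the Maurer–Cartan locus: in a graded Lie algebra with a
degree-2 equivariant operation `m_c` ("multiplication by `c`") that is injective
on `g^1`, any `α ∈ g^1`, `β ∈ g^0` with `m_c(β) + ½[α,α] = 0` satisfy `[α,β] = 0`;
hence the Maurer–Cartan locus coincides with the quadratic variety
`{(α,β) : m_c(β) + ½[α,α] = 0}`. -/
theorem stmt10 {V : Type*} [AddCommGroup V] [Module ℂ V]
    (g : ℤ → Submodule ℂ V)
    (br : V →ₗ[ℂ] V →ₗ[ℂ] V)
    (hgrade : ∀ i j : ℤ, ∀ x ∈ g i, ∀ y ∈ g j, br x y ∈ g (i + j))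
    (hanti : ∀ i j : ℤ, ∀ x ∈ g i, ∀ y ∈ g j,
      br x y = (-((-1 : ℂ) ^ (i * j))) • br y x)
    (hjacobi : ∀ i j k : ℤ, ∀ x ∈ g i, ∀ y ∈ g j, ∀ z ∈ g k,
      ((-1 : ℂ) ^ (i * k)) • br x (br y z) + ((-1 : ℂ) ^ (j * i)) • br y (br z x)
        + ((-1 : ℂ) ^ (k * j)) • br z (br x y) = 0)
    (mc : V →ₗ[ℂ] V)
    (hmcgrade : ∀ k : ℤ, ∀ x ∈ g k, mc x ∈ g (k + 2))
    (hequiv : ∀ x ∈ g 1, ∀ y ∈ g 0, mc (br x y) = br x (mc y))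
    (hinj : ∀ x ∈ g 1, mc x = 0 → x = 0)
    (α : V) (hα : α ∈ g 1) (β : V) (hβ : β ∈ g 0)
    (hMC : mc β + (2⁻¹ : ℂ) • br α α = 0) :
    br α β = 0 := by
  have hj := hjacobi 1 1 1 α hα α hα α hα
  have h3 : br α (br α α) = 0 := by
    have h : (-3 : ℂ) • br α (br α α) = 0 := by
      rw [show (-3 : ℂ) = (-1)^(1*1 : ℤ) + (-1)^(1*1:ℤ) + (-1)^(1*1:ℤ) by norm_num,
        add_smul, add_smul]
      exact hj
    rcases smul_eq_zero.mp h with h | h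
    · norm_num at h
    · exact h
  have hmb : mc β = -((2⁻¹ : ℂ) • br α α) := by
    rw [eq_neg_iff_add_eq_zero]; exact hMC
  have hz : mc (br α β) = 0 := by
    rw [hequiv α hα β hβ, hmb, map_neg, map_smul, h3, smul_zero, neg_zero]
  exact hinj (br α β) (by simpa using hgrade 1 0 α hα β hβ) hz
end
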